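/- Let A_p = 𝔽_p-coefficient completion of A at a maximal ideal 𝔭 different from the characteristic ideal of φ̄, and let R = k[τ] with R° = k[τ^{±1}], viewed as A-modules via a Drinfeld module φ̄: A ↪ R whose characteristic ideal (the kernel of the induced map A → R/Rτ ≅ k) is 𝔭₀. Then for any prime 𝔭 ≠ 𝔭₀ of A, the inclusion R ↪ R° induces an isomorphism A_𝔭 ⊗_A R ≅ A_𝔭 ⊗_A R°. -/

import Mathlib

/-!
Injectivity holds because the adic completion of a Noetherian ring is flat. For surjectivity,
look at `Rcirc / R`: it is exhausted by the pieces `R τ⁻ⁿ / R`, each finite since its successive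
quotients are copies of `R/Rτ`. Left multiplication by `φ a₀` is injective on `Rcirc / R`, because
it is injective on `R/Rτ`, and it preserves each finite piece; so every class is fixed by some
`φ a₀ ^ t` with `t > 0`, i.e. killed by `1 - a₀ ^ t`. As `a₀ ∈ 𝔭`, this element is a unit in the
`𝔭`-adic completion, so the cokernel dies after base change.
-/

open TensorProduct

theorem AdicCompletion.isUnit_one_sub_algebraMap {A : Type*} [CommRing A] {I : Ideal A}
    (hI : I.FG) {b : A} (hb : b ∈ I) : IsUnit (1 - algebraMap A (AdicCompletion I A) b) := by
  have := AdicCompletion.isAdicComplete_self I hI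
  have hjac := IsAdicComplete.le_jacobson_bot _
    (Ideal.mem_map_of_mem (algebraMap A (AdicCompletion I A)) hb)
  simpa [sub_eq_neg_add] using Ideal.mem_jacobson_bot.1 hjac (-1)

theorem LinearMap.baseChange_surjective_of_exists_smul_mem_range {A B M N : Type*}
    [CommSemiring A] [CommSemiring B] [Algebra A B] [AddCommMonoid M] [Module A M]
    [AddCommMonoid N] [Module A N] (f : M →ₗ[A] N)
    (h : ∀ y : N, ∃ b : A, IsUnit (algebraMap A B b) ∧ b • y ∈ LinearMap.range f) :
    Function.Surjective (f.baseChange B) := by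
  rw [← LinearMap.range_eq_top, eq_top_iff]
  rintro z -
  induction z using TensorProduct.induction_on with
  | zero => exact zero_mem _
  | add x y hx hy => exact add_mem hx hy
  | tmul c y =>
    obtain ⟨b, hb, x, hx⟩ := h y
    refine ⟨(↑hb.unit⁻¹ * c) ⊗ₜ x, ?_⟩
    rw [LinearMap.baseChange_tmul, hx, ← smul_tmul, Algebra.smul_def, ← mul_assoc,
      hb.mul_val_inv, one_mul]

section TwistedLaurent

variable {R Rcirc : Type*} [Ring R] [Ring Rcirc] {ι : R →+* Rcirc} {τ : R}

theorem exists_finset_sub_mem_range_of_mul_pow_mem_range (hτ : IsUnit (ι τ))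
    (hfin : ∃ S : Finset R, ∀ y : R, ∃ s ∈ S, ∃ w : R, y = s + w * τ) (n : ℕ) :
    ∃ T : Finset Rcirc, ∀ y, y * ι τ ^ n ∈ ι.range → ∃ s ∈ T, y - s ∈ ι.range := by
  classical
  obtain ⟨S, hS⟩ := hfin
  obtain ⟨u, hu⟩ := hτ
  induction n with
  | zero => exact ⟨{0}, fun y hy => ⟨0, Finset.mem_singleton_self 0, by simpa using hy⟩⟩
  | succ n ih =>
    obtain ⟨T, hT⟩ := ih
    refine ⟨(T ×ˢ S).image fun q => (q.1 + ι q.2) * ↑u⁻¹, fun y hy => ?_⟩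
    obtain ⟨s, hsT, w, hw⟩ := hT (y * ι τ) (by rwa [mul_assoc, ← pow_succ'])
    obtain ⟨s', hs'S, w', rfl⟩ := hS w
    refine ⟨_, Finset.mem_image.2 ⟨(s, s'), Finset.mem_product.2 ⟨hsT, hs'S⟩, rfl⟩, w', ?_⟩
    rw [← u.mul_left_inj, sub_mul, mul_assoc, u.inv_mul, mul_one, hu, ← sub_sub, ← hw, map_add,
      map_mul, add_sub_cancel_left]

theorem mem_range_of_mul_mem_range (hι : Function.Injective ι) (hτ : IsUnit (ι τ))
    (hunion : ∀ x : Rcirc, ∃ (n : ℕ) (r : R), x * (ι τ) ^ n = ι r) {c : R}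
    (hc : ∀ z : R, (∃ w : R, c * z = w * τ) → ∃ w' : R, z = w' * τ) {y : Rcirc}
    (hcy : ι c * y ∈ ι.range) : y ∈ ι.range := by
  obtain ⟨n, r, hr⟩ := hunion y
  induction n generalizing y r with
  | zero => exact ⟨r, by simpa using hr.symm⟩
  | succ n ih =>
    obtain ⟨w, hw⟩ := ih (by rw [← mul_assoc]; exact mul_mem hcy (ι.mem_range_self τ)) r
      (by rwa [mul_assoc, ← pow_succ'])
    obtain ⟨s, hs⟩ := hcy
    have hcw : c * w = s * τ := hι <| by rw [map_mul, hw, ← mul_assoc, ← hs, map_mul]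
    obtain ⟨w', rfl⟩ := hc w ⟨s, hcw⟩
    exact ⟨w', hτ.mul_right_cancel (by rw [← map_mul, hw])⟩

theorem mem_range_of_pow_mul_mem_range (hι : Function.Injective ι) (hτ : IsUnit (ι τ))
    (hunion : ∀ x : Rcirc, ∃ (n : ℕ) (r : R), x * (ι τ) ^ n = ι r) {c : R}
    (hc : ∀ z : R, (∃ w : R, c * z = w * τ) → ∃ w' : R, z = w' * τ) (m : ℕ) {y : Rcirc}
    (hcy : ι c ^ m * y ∈ ι.range) : y ∈ ι.range := by
  induction m generalizing y with
  | zero => simpa using hcy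
  | succ m ih =>
    exact mem_range_of_mul_mem_range hι hτ hunion hc (ih (by rwa [← mul_assoc, ← pow_succ]))

theorem exists_sub_pow_mul_mem_range (hι : Function.Injective ι) (hτ : IsUnit (ι τ))
    (hunion : ∀ x : Rcirc, ∃ (n : ℕ) (r : R), x * (ι τ) ^ n = ι r)
    (hfin : ∃ S : Finset R, ∀ y : R, ∃ s ∈ S, ∃ w : R, y = s + w * τ) {c : R}
    (hc : ∀ z : R, (∃ w : R, c * z = w * τ) → ∃ w' : R, z = w' * τ) (y : Rcirc) :
    ∃ t, 0 < t ∧ y - ι c ^ t * y ∈ ι.range := by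
  obtain ⟨n, r, hr⟩ := hunion y
  obtain ⟨T, hT⟩ := exists_finset_sub_mem_range_of_mul_pow_mem_range hτ hfin n
  have hlevel (k : ℕ) : ι c ^ k * y * ι τ ^ n ∈ ι.range := by
    rw [mul_assoc, hr]
    exact mul_mem (pow_mem (ι.mem_range_self c) k) (ι.mem_range_self r)
  choose s hsT hs using fun k => hT _ (hlevel k)
  obtain ⟨i, j, hij, hsij⟩ := T.finite_toSet.exists_lt_map_eq_of_forall_mem hsT
  refine ⟨j - i, Nat.sub_pos_of_lt hij, mem_range_of_pow_mul_mem_range hι hτ hunion hc i ?_⟩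
  have hdiff : ι c ^ i * (y - ι c ^ (j - i) * y) =
      (ι c ^ i * y - s i) - (ι c ^ j * y - s j) := by
    rw [hsij, mul_sub, ← mul_assoc, ← pow_add, Nat.add_sub_cancel' hij.le]
    abel
  exact hdiff ▸ sub_mem (hs i) (hs j)

end TwistedLaurent

theorem completion_tensor_twisted_ring_iso
    (A : Type) [CommRing A] [IsDedekindDomain A]
    (R Rcirc : Type) [Ring R] [Ring Rcirc]
    (ι : R →+* Rcirc) (hι : Function.Injective ι)
    (τ : R) (hτunit : IsUnit (ι τ))
    (hunion : ∀ x : Rcirc, ∃ (n : ℕ) (r : R), x * (ι τ) ^ n = ι r)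
    (φ : A →+* R)
    -- `R/Rτ` is finite (it is the finite field `k`):
    (hfin : ∃ S : Finset R, ∀ y : R, ∃ s ∈ S, ∃ w : R, y = s + w * τ)
    -- any `a ∉ 𝔭₀` (i.e. `φ a ∉ Rτ`) acts bijectively on `R/Rτ ≅ k`:
    (hresidue : ∀ a : A, (¬ ∃ r : R, φ a = r * τ) →
      (∀ y : R, ∃ z w : R, φ a * z + w * τ = y) ∧
      (∀ z : R, (∃ w : R, φ a * z = w * τ) → ∃ w' : R, z = w' * τ))
    (𝔭 : Ideal A)
    -- `𝔭 ≠ 𝔭₀`, the characteristic ideal `𝔭₀ = ker (A → R/Rτ)`: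
    (a₀ : A) (ha₀ : a₀ ∈ 𝔭) (ha₀R : ¬ ∃ r : R, φ a₀ = r * τ) :
    letI : Module A R := Module.compHom R φ
    letI : Module A Rcirc := Module.compHom Rcirc (ι.comp φ)
    Function.Bijective
      (LinearMap.baseChange (AdicCompletion 𝔭 A)
        ({ toFun := ι,
           map_add' := fun x y => map_add ι x y,
           map_smul' := fun a r => map_mul ι (φ a) r } : R →ₗ[A] Rcirc)) := by
  let _ : Module A R := Module.compHom R φ
  let _ : Module A Rcirc := Module.compHom Rcirc (ι.comp φ)
  refine ⟨?_, LinearMap.baseChange_surjective_of_exists_smul_mem_range _ fun y => ?_⟩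
  · rw [LinearMap.baseChange_eq_ltensor]
    exact Module.Flat.lTensor_preserves_injective_linearMap _ hι
  · obtain ⟨t, ht, r, hr⟩ :=
      exists_sub_pow_mul_mem_range hι hτunit hunion hfin (hresidue a₀ ha₀R).2 y
    refine ⟨1 - a₀ ^ t, AdicCompletion.isUnit_one_sub_algebraMap (IsNoetherian.noetherian 𝔭)
      (Ideal.pow_mem_of_mem 𝔭 ha₀ t ht), r, ?_⟩
    change ι r = ι (φ (1 - a₀ ^ t)) * y
    simp [hr, sub_mul]
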